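/- arXiv:2509.09884 — 17 statements merged into one kernel-verified Lean document; each statement's English description precedes it below -/
import Mathlib

section
/- Let (A,·,P) be an averaging commutative algebra over a field K of characteristic zero. Define x∘y := P(x)·y for all x,y ∈ A. Then (A,∘) is a perm algebra, i.e., x∘(y∘z) = (x∘y)∘z = (y∘x)∘z for all x,y,z ∈ A. -/
/-- If `(A, ·, P)` is an averaging commutative algebra over a field `K` of
characteristic zero, then `x ∘ y := P(x) · y` makes `A` a perm algebra. -/
theorem averaging_commutative_algebra_gives_perm
    {K : Type*} [Field K] [CharZero K]
    {A : Type*} [AddCommGroup A] [Module K A]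
    (mul : A →ₗ[K] A →ₗ[K] A)
    (hcomm : ∀ x y : A, mul x y = mul y x)
    (hassoc : ∀ x y z : A, mul (mul x y) z = mul x (mul y z))
    (P : A →ₗ[K] A)
    (havg : ∀ x y : A, mul (P x) (P y) = P (mul (P x) y)) :
    ∀ x y z : A,
      mul (P x) (mul (P y) z) = mul (P (mul (P x) y)) z ∧
      mul (P (mul (P x) y)) z = mul (P (mul (P y) x)) z := by
  intro x y z
  have h1 : P (mul (P x) y) = P (mul (P y) x) := by
    rw [← havg, ← havg, hcomm]
  constructor
  · rw [← hassoc, havg]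
  · rw [h1]
end

section
/- Let (A,·,P) be an averaging commutative algebra over a field K of characteristic zero, V a K-vector space, and μ : A → End(V), α : V → V linear maps. Then (μ,α,V) is a representation of (A,·,P) if and only if the multiplication on A ⊕ V defined by (x+u)·_d(y+v) := x·y + μ(x)v + μ(y)u (x,y ∈ A, u,v ∈ V) is associative (hence makes A ⊕ V a commutative associative algebra) and the linear map P+α : A ⊕ V → A ⊕ V, x+u ↦ P(x)+α(u), is an averaging operator on (A ⊕ V, ·_d). -/
/-- `(μ, α, V)` is a representation of the averaging commutative algebra
`(A, ·, P)` if and only if the multiplication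
`(x+u) ·_d (y+v) := x·y + μ(x)v + μ(y)u` on `A ⊕ V` is associative and
`P + α` is an averaging operator on `(A ⊕ V, ·_d)`. -/
theorem averaging_representation_iff_semidirect
    {K : Type*} [Field K] [CharZero K]
    {A : Type*} [AddCommGroup A] [Module K A]
    {V : Type*} [AddCommGroup V] [Module K V]
    (mul : A →ₗ[K] A →ₗ[K] A)
    (hcomm : ∀ x y : A, mul x y = mul y x)
    (hassoc : ∀ x y z : A, mul (mul x y) z = mul x (mul y z))
    (P : A →ₗ[K] A)
    (havg : ∀ x y : A, mul (P x) (P y) = P (mul (P x) y))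
    (μ : A →ₗ[K] V →ₗ[K] V) (α : V →ₗ[K] V) :
    let muld : A × V → A × V → A × V :=
      fun p q => (mul p.1 q.1, μ p.1 q.2 + μ q.1 p.2)
    let Pα : A × V → A × V := fun p => (P p.1, α p.2)
    (((∀ x y : A, ∀ v : V, μ (mul x y) v = μ x (μ y v)) ∧
      (∀ x : A, ∀ v : V,
        μ (P x) (α v) = α (μ (P x) v) ∧ α (μ (P x) v) = α (μ x (α v)))) ↔
      ((∀ p q s : A × V, muld (muld p q) s = muld p (muld q s)) ∧
       (∀ p q : A × V, muld (Pα p) (Pα q) = Pα (muld (Pα p) q)))) := by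
  intro muld Pα
  constructor
  · rintro ⟨hrep, hcomp⟩
    constructor
    · rintro ⟨x, u⟩ ⟨y, v⟩ ⟨z, w⟩
      have hsw : ∀ a b : A, ∀ t : V, μ a (μ b t) = μ b (μ a t) := by
        intro a b t
        rw [← hrep, hcomm, hrep]
      simp only [muld, Prod.mk.injEq, hassoc, map_add, true_and]
      rw [hrep, hrep, hsw z x, hsw z y]
      abel
    · rintro ⟨x, u⟩ ⟨y, v⟩
      have h1 := (hcomp x v).1
      have h2 : μ (P y) (α u) = α (μ y (α u)) := by
        rw [(hcomp y u).1, (hcomp y u).2]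
      simp only [muld, Pα, Prod.mk.injEq, havg, map_add, true_and]
      rw [h1, h2]
  · rintro ⟨hasc, havd⟩
    constructor
    · intro x y v
      have := congrArg Prod.snd (hasc (x, 0) (y, 0) (0, v))
      simpa [muld] using this
    · intro x v
      have h1 := congrArg Prod.snd (havd (x, 0) (0, v))
      have h2 := congrArg Prod.snd (havd (0, v) (x, 0))
      simp only [muld, Pα, map_zero, LinearMap.zero_apply, zero_add, add_zero] at h1 h2
      exact ⟨h1, h1 ▸ h2⟩
end

section
/- Let (A,·,P) be a finite-dimensional averaging commutative algebra over a field K of characteristic zero, V a finite-dimensional K-vector space, and μ : A → End(V), β : V → V linear maps. For x ∈ A let μ*(x) : V* → V* be the transpose of μ(x) and β* : V* → V* the transpose of β. Then (μ*,β*,V*) is a representation of (A,·,P) if and only if (μ,β,V) is a representation of (A,·,P), i.e., μ(x·y) = μ(x)μ(y) and μ(P(x))β(v) = β(μ(P(x))v) = β(μ(x)β(v)) for all x,y ∈ A, v ∈ V. -/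
lemma dual_sep {K : Type*} [Field K] {V : Type*} [AddCommGroup V] [Module K V]
    {u v : V} (h : ∀ φ : Module.Dual K V, φ u = φ v) : u = v := by
  have : ∀ φ : Module.Dual K V, φ (u - v) = 0 := by
    intro φ; simp [h φ]
  have := (Module.forall_dual_apply_eq_zero_iff K (u - v)).1 this
  exact sub_eq_zero.mp this

/-- `(μ*, β*, V*)` is a representation of the averaging commutative algebra
`(A, ·, P)` if and only if `(μ, β, V)` is. -/
theorem dual_representation_iff
    {K : Type*} [Field K] [CharZero K]
    {A : Type*} [AddCommGroup A] [Module K A] [FiniteDimensional K A]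
    {V : Type*} [AddCommGroup V] [Module K V] [FiniteDimensional K V]
    (mul : A →ₗ[K] A →ₗ[K] A)
    (hcomm : ∀ x y : A, mul x y = mul y x)
    (hassoc : ∀ x y z : A, mul (mul x y) z = mul x (mul y z))
    (P : A →ₗ[K] A)
    (havg : ∀ x y : A, mul (P x) (P y) = P (mul (P x) y))
    (μ : A →ₗ[K] V →ₗ[K] V) (β : V →ₗ[K] V) :
    ((∀ x y : A, ∀ φ : Module.Dual K V,
        (μ (mul x y)).dualMap φ = (μ x).dualMap ((μ y).dualMap φ)) ∧
     (∀ x : A, ∀ φ : Module.Dual K V,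
        (μ (P x)).dualMap (β.dualMap φ) = β.dualMap ((μ (P x)).dualMap φ) ∧
        β.dualMap ((μ (P x)).dualMap φ) = β.dualMap ((μ x).dualMap (β.dualMap φ)))) ↔
    ((∀ x y : A, ∀ v : V, μ (mul x y) v = μ x (μ y v)) ∧
     (∀ x : A, ∀ v : V,
        μ (P x) (β v) = β (μ (P x) v) ∧ β (μ (P x) v) = β (μ x (β v)))) := by
  constructor
  · rintro ⟨h1, h2⟩
    constructor
    · intro x y v
      apply dual_sep (K := K)
      intro φ
      have := congrArg (fun ψ : Module.Dual K V => ψ v) (h1 y x φ)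
      simpa [LinearMap.dualMap_apply, hcomm x y] using this
    · intro x v
      have e1 : μ (P x) (β v) = β (μ (P x) v) := by
        apply dual_sep (K := K)
        intro φ
        have := congrArg (fun ψ : Module.Dual K V => ψ v) (h2 x φ).1
        simpa [LinearMap.dualMap_apply] using this.symm
      have e2 : β (μ (P x) v) = β (μ x (β v)) := by
        rw [← e1]
        apply dual_sep (K := K)
        intro φ
        have := congrArg (fun ψ : Module.Dual K V => ψ v) (h2 x φ).2
        simpa [LinearMap.dualMap_apply] using this
      exact ⟨e1, e2⟩
  · rintro ⟨h1, h2⟩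
    constructor
    · intro x y φ
      ext v
      simp [LinearMap.dualMap_apply, hcomm x y, h1 y x v]
    · intro x φ
      constructor <;> ext v <;>
        simp [LinearMap.dualMap_apply, (h2 x v).1, (h2 x v).2]
end

section
/- Let (A,·) be a commutative associative algebra over a field K of characteristic zero, B a nondegenerate invariant bilinear form on (A,·), P an averaging operator on (A,·), and P̂ : A → A a linear map satisfying B(P(x),y) = B(x,P̂(y)) for all x,y ∈ A. Then (A,·,P,P̂) is an admissible averaging commutative algebra, i.e., P(x)·P̂(y) = P̂(P(x)·y) = P̂(x·P̂(y)) for all x,y ∈ A. -/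
/-- If `B` is a nondegenerate invariant bilinear form on a commutative
associative algebra `(A, ·)`, `P` is an averaging operator and `P̂` its adjoint with
respect to `B`, then `(A, ·, P, P̂)` is an admissible averaging commutative algebra. -/
theorem adjoint_of_averaging_is_admissible
    {K : Type*} [Field K] [CharZero K]
    {A : Type*} [AddCommGroup A] [Module K A]
    (mul : A →ₗ[K] A →ₗ[K] A)
    (hcomm : ∀ x y : A, mul x y = mul y x)
    (hassoc : ∀ x y z : A, mul (mul x y) z = mul x (mul y z))
    (B : A →ₗ[K] A →ₗ[K] K)
    (hnd₁ : ∀ x : A, (∀ y : A, B x y = 0) → x = 0)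
    (hnd₂ : ∀ y : A, (∀ x : A, B x y = 0) → y = 0)
    (hinv : ∀ x y z : A, B (mul x y) z = B x (mul y z))
    (P Phat : A →ₗ[K] A)
    (havg : ∀ x y : A, mul (P x) (P y) = P (mul (P x) y))
    (hadj : ∀ x y : A, B (P x) y = B x (Phat y)) :
    ∀ x y : A,
      mul (P x) (Phat y) = Phat (mul (P x) y) ∧
      Phat (mul (P x) y) = Phat (mul x (Phat y)) := by
  intro x y
  have key : ∀ u v : A, (∀ z : A, B z u = B z v) → u = v := by
    intro u v h
    have : u - v = 0 := hnd₂ _ (fun z => by simp [map_sub, h z])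
    exact sub_eq_zero.mp this
  constructor
  · apply key
    intro z
    calc B z (mul (P x) (Phat y))
        = B (mul z (P x)) (Phat y) := (hinv z (P x) (Phat y)).symm
      _ = B (P (mul z (P x))) y := (hadj _ y).symm
      _ = B (mul (P x) (P z)) y := by rw [hcomm z (P x), ← havg]
      _ = B (mul (P z) (P x)) y := by rw [hcomm]
      _ = B (P z) (mul (P x) y) := hinv _ _ _
      _ = B z (Phat (mul (P x) y)) := hadj _ _
  · apply key
    intro z
    calc B z (Phat (mul (P x) y))
        = B (P z) (mul (P x) y) := (hadj _ _).symm
      _ = B (mul (P z) (P x)) y := (hinv _ _ _).symm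
      _ = B (P (mul (P z) x)) y := by rw [havg]
      _ = B (mul (P z) x) (Phat y) := hadj _ _
      _ = B (P z) (mul x (Phat y)) := hinv _ _ _
      _ = B z (Phat (mul x (Phat y))) := hadj _ _
end

section
/- Let (A,∘) be a perm algebra over a field K of characteristic zero and B a symmetric left-invariant bilinear form on (A,∘). Then B is a commutative 2-cocycle on the sub-adjacent Lie algebra (A,[-,-]) with bracket [x,y] := x∘y − y∘x, i.e., B([x,y],z) + B([y,z],x) + B([z,x],y) = 0 for all x,y,z ∈ A. -/
/-- A symmetric left-invariant bilinear form on a perm algebra is a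
commutative 2-cocycle on the sub-adjacent Lie algebra `[x,y] := x∘y − y∘x`. -/
theorem left_invariant_form_is_commutative_two_cocycle
    {K : Type*} [Field K] [CharZero K]
    {A : Type*} [AddCommGroup A] [Module K A]
    (circ : A →ₗ[K] A →ₗ[K] A)
    (hperm : ∀ x y z : A,
      circ x (circ y z) = circ (circ x y) z ∧
      circ (circ x y) z = circ (circ y x) z)
    (B : A →ₗ[K] A →ₗ[K] K)
    (hsymm : ∀ x y : A, B x y = B y x)
    (hli : ∀ x y z : A, B (circ x y) z = B y (circ x z)) :
    ∀ x y z : A,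
      B (circ x y - circ y x) z + B (circ y z - circ z y) x
        + B (circ z x - circ x z) y = 0 := by
  intro x y z
  simp only [map_sub, LinearMap.sub_apply, hli]
  rw [hsymm z (circ x y), hli, hsymm z (circ y x), hli, hsymm x (circ z y), hli]
  ring
end

section
/- Let A be a finite-dimensional vector space over a field K of characteristic zero with bilinear multiplications ▷ and ◁, and set x∘y := x▷y + x◁y and x•y := x▷y + y◁x. Let L_•(x)y := x•y and R_◁(x)y := y◁x, and let L*_•(x), R*_◁(x) denote the transposes of L_•(x), R_◁(x) acting on A*. Then the following statements are equivalent: (a) (A,▷,◁) is an apre-perm algebra; (b) (A,∘) is a perm algebra and (L*_•, −R*_◁, A*) is a representation of (A,∘); (c) (A,∘) is a perm algebra and (L_•, L_• + R_◁, A) is a representation of (A,∘). -/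
/-- A (binary) multiplication `c` on `A` is a perm multiplication if
`x∘(y∘z) = (x∘y)∘z = (y∘x)∘z`. -/
def IsPerm {A : Type*} (c : A → A → A) : Prop :=
  ∀ x y z : A, c x (c y z) = c (c x y) z ∧ c (c x y) z = c (c y x) z

/-- `(A, ▷, ◁)` is an apre-perm algebra: with `x∘y := x▷y + x◁y` and
`x•y := x▷y + y◁x`, the operation `∘` is perm and
`(x∘y)•z = x•(y•z) = y•(x•z)` and
`z◁(x∘y) = −(z◁y)◁x = x•(z◁y) = (x•z)◁y`. -/
def IsAprePerm {A : Type*} [AddCommGroup A] (tr tl : A → A → A) : Prop :=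
  let c : A → A → A := fun x y => tr x y + tl x y
  let b : A → A → A := fun x y => tr x y + tl y x
  IsPerm c ∧
  (∀ x y z : A,
      b (c x y) z = b x (b y z) ∧ b x (b y z) = b y (b x z)) ∧
  (∀ x y z : A,
      tl z (c x y) = -(tl (tl z y) x) ∧
      -(tl (tl z y) x) = b x (tl z y) ∧
      b x (tl z y) = tl (b x z) y)

/-- equivalence of the three characterizations of an apre-perm algebra. -/
theorem apre_perm_characterizations
    {K : Type*} [Field K] [CharZero K]
    {A : Type*} [AddCommGroup A] [Module K A] [FiniteDimensional K A]
    (rt lt : A →ₗ[K] A →ₗ[K] A) :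
    let circ : A → A → A := fun x y => rt x y + lt x y
    -- L_•(x) = L_▷(x) + R_◁(x) as an endomorphism of A
    let Lb : A → A →ₗ[K] A := fun x => rt x + lt.flip x
    -- transposes on A*
    let l : A → Module.Dual K A →ₗ[K] Module.Dual K A := fun x => (Lb x).dualMap
    let r : A → Module.Dual K A →ₗ[K] Module.Dual K A := fun x => -((lt.flip x).dualMap)
    -- endomorphisms of A for condition (c)
    let l' : A → A →ₗ[K] A := fun x => Lb x
    let r' : A → A →ₗ[K] A := fun x => Lb x + lt.flip x
    ((IsAprePerm (fun x y => rt x y) (fun x y => lt x y) ↔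
      (IsPerm circ ∧
        ∀ x y : A, ∀ φ : Module.Dual K A,
          l (circ x y) φ = l x (l y φ) ∧
          l x (l y φ) = l y (l x φ) ∧
          r (circ x y) φ = r y (r x φ) ∧
          r y (r x φ) = r y (l x φ) ∧
          r y (l x φ) = l x (r y φ))) ∧
     ((IsPerm circ ∧
        ∀ x y : A, ∀ φ : Module.Dual K A,
          l (circ x y) φ = l x (l y φ) ∧
          l x (l y φ) = l y (l x φ) ∧
          r (circ x y) φ = r y (r x φ) ∧
          r y (r x φ) = r y (l x φ) ∧
          r y (l x φ) = l x (r y φ)) ↔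
      (IsPerm circ ∧
        ∀ x y v : A,
          l' (circ x y) v = l' x (l' y v) ∧
          l' x (l' y v) = l' y (l' x v) ∧
          r' (circ x y) v = r' y (r' x v) ∧
          r' y (r' x v) = r' y (l' x v) ∧
          r' y (l' x v) = l' x (r' y v)))) := by
  intro circ Lb l r l' r'
  have sep : ∀ a b : A, (∀ φ : Module.Dual K A, φ a = φ b) → a = b := by
    intro a b h
    rw [← sub_eq_zero, ← Module.forall_dual_apply_eq_zero_iff K (a - b)]
    intro φ; simp [h φ]
  -- pointwise descriptions
  have hl : ∀ (x : A) (φ : Module.Dual K A) (v : A), l x φ v = φ (Lb x v) := fun _ _ _ => rfl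
  have hr : ∀ (x : A) (φ : Module.Dual K A) (v : A), r x φ v = -φ (lt v x) := fun _ _ _ => rfl
  have hl' : ∀ (x v : A), l' x v = Lb x v := fun _ _ => rfl
  have hr' : ∀ (x v : A), r' x v = Lb x v + lt v x := fun _ _ => rfl
  -- the common reduced form
  have hA : IsAprePerm (fun x y => rt x y) (fun x y => lt x y) ↔
      (IsPerm circ ∧
        (∀ x y v : A, Lb (circ x y) v = Lb x (Lb y v)) ∧
        (∀ x y v : A, Lb x (Lb y v) = Lb y (Lb x v)) ∧
        (∀ x y z : A, lt z (circ x y) = -lt (lt z y) x) ∧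
        (∀ x y z : A, -lt (lt z y) x = Lb x (lt z y)) ∧
        (∀ x y z : A, Lb x (lt z y) = lt (Lb x z) y)) := by
    constructor
    · rintro ⟨hp, h1, h2⟩
      exact ⟨hp, fun x y v => (h1 x y v).1, fun x y v => (h1 x y v).2,
        fun x y z => (h2 x y z).1, fun x y z => (h2 x y z).2.1, fun x y z => (h2 x y z).2.2⟩
    · rintro ⟨hp, hq1, hq2, hq3, hq4, hq5⟩
      exact ⟨hp, fun x y z => ⟨hq1 x y z, hq2 x y z⟩,
        fun x y z => ⟨hq3 x y z, hq4 x y z, hq5 x y z⟩⟩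
  have hB : (IsPerm circ ∧
        ∀ x y : A, ∀ φ : Module.Dual K A,
          l (circ x y) φ = l x (l y φ) ∧
          l x (l y φ) = l y (l x φ) ∧
          r (circ x y) φ = r y (r x φ) ∧
          r y (r x φ) = r y (l x φ) ∧
          r y (l x φ) = l x (r y φ)) ↔
      (IsPerm circ ∧
        (∀ x y v : A, Lb (circ x y) v = Lb x (Lb y v)) ∧
        (∀ x y v : A, Lb x (Lb y v) = Lb y (Lb x v)) ∧
        (∀ x y z : A, lt z (circ x y) = -lt (lt z y) x) ∧
        (∀ x y z : A, -lt (lt z y) x = Lb x (lt z y)) ∧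
        (∀ x y z : A, Lb x (lt z y) = lt (Lb x z) y)) := by
    constructor
    · rintro ⟨hp, hd⟩
      refine ⟨hp, ?_, ?_, ?_, ?_, ?_⟩
      · intro x y v
        apply sep; intro φ
        have h1 := DFunLike.congr_fun (hd x y φ).1 v
        have h2 := DFunLike.congr_fun (hd x y φ).2.1 v
        simp only [hl] at h1 h2
        exact h1.trans h2
      · intro x y v
        apply sep; intro φ
        have h2 := DFunLike.congr_fun (hd x y φ).2.1 v
        simp only [hl] at h2
        exact h2.symm
      · intro x y z
        apply sep; intro φ
        have h := DFunLike.congr_fun (hd x y φ).2.2.1 z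
        simp only [hl, hr] at h
        rw [map_neg]
        linear_combination -h
      · intro x y z
        apply sep; intro φ
        have h := DFunLike.congr_fun (hd x y φ).2.2.2.1 z
        simp only [hl, hr] at h
        rw [map_neg]
        linear_combination -h
      · intro x y z
        apply sep; intro φ
        have h := DFunLike.congr_fun (hd x y φ).2.2.2.2 z
        simp only [hl, hr] at h
        linear_combination -h
    · rintro ⟨hp, hq1, hq2, hq3, hq4, hq5⟩
      refine ⟨hp, fun x y φ => ⟨?_, ?_, ?_, ?_, ?_⟩⟩
      · ext v; simp only [hl]; rw [hq1 x y v, hq2 x y v]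
      · ext v; simp only [hl]; rw [hq2 x y v]
      · ext v; simp only [hl, hr]; rw [hq3 x y v]; simp [map_neg]
      · ext v; simp only [hl, hr]; rw [← hq4 x y v]; simp [map_neg]
      · ext v; simp only [hl, hr]; rw [hq5 x y v]
  have hC : (IsPerm circ ∧
        ∀ x y v : A,
          l' (circ x y) v = l' x (l' y v) ∧
          l' x (l' y v) = l' y (l' x v) ∧
          r' (circ x y) v = r' y (r' x v) ∧
          r' y (r' x v) = r' y (l' x v) ∧
          r' y (l' x v) = l' x (r' y v)) ↔
      (IsPerm circ ∧
        (∀ x y v : A, Lb (circ x y) v = Lb x (Lb y v)) ∧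
        (∀ x y v : A, Lb x (Lb y v) = Lb y (Lb x v)) ∧
        (∀ x y z : A, lt z (circ x y) = -lt (lt z y) x) ∧
        (∀ x y z : A, -lt (lt z y) x = Lb x (lt z y)) ∧
        (∀ x y z : A, Lb x (lt z y) = lt (Lb x z) y)) := by
    constructor
    · rintro ⟨hp, hc⟩
      have hq1 : ∀ x y v : A, Lb (circ x y) v = Lb x (Lb y v) := fun x y v => (hc x y v).1
      have hq2 : ∀ x y v : A, Lb x (Lb y v) = Lb y (Lb x v) := fun x y v => (hc x y v).2.1
      have hq4 : ∀ x y z : A, -lt (lt z y) x = Lb x (lt z y) := by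
        intro x y z
        have h := (hc y x z).2.2.2.1
        simp only [hr', hl', map_add, LinearMap.add_apply] at h
        linear_combination (norm := abel) -h
      have hq5 : ∀ x y z : A, Lb x (lt z y) = lt (Lb x z) y := by
        intro x y z
        have h := (hc x y z).2.2.2.2
        simp only [hr', hl', map_add, LinearMap.add_apply] at h
        linear_combination (norm := abel) -h - hq2 x y z
      have hq3 : ∀ x y z : A, lt z (circ x y) = -lt (lt z y) x := by
        intro x y z
        have h := (hc x y z).2.2.1
        simp only [hr', hl', map_add, LinearMap.add_apply] at h
        linear_combination (norm := abel) h - hq1 x y z - hq2 x y z - hq4 y x z - hq5 x y z - hq4 x y z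
      exact ⟨hp, hq1, hq2, hq3, hq4, hq5⟩
    · rintro ⟨hp, hq1, hq2, hq3, hq4, hq5⟩
      refine ⟨hp, fun x y v => ⟨hq1 x y v, hq2 x y v, ?_, ?_, ?_⟩⟩
      · simp only [hr', hl', map_add, LinearMap.add_apply]
        linear_combination (norm := abel)
          hq1 x y v + hq2 x y v + hq3 x y v + hq4 x y v + hq5 x y v + hq4 y x v
      · simp only [hr', hl', map_add, LinearMap.add_apply]
        linear_combination (norm := abel) -hq4 y x v
      · simp only [hr', hl', map_add, LinearMap.add_apply]
        linear_combination (norm := abel) -hq2 x y v - hq5 x y v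
  exact ⟨hA.trans hB.symm, hB.trans hC.symm⟩
end

section
/- Let (A,∘) be a perm algebra over a field K of characteristic zero, V a K-vector space, and l,r : A → End(V) linear maps. Define l̃ := 2l − r and r̃ := r − l. Then (l,r,V) is a representation of (A,∘) if and only if for all x,y ∈ A and v ∈ V: (1) l̃(y)r̃(x)v + 2 r̃(y)r̃(x)v = 0; (2) r̃(x∘y)v = −r̃(x)r̃(y)v = r̃(y)(l̃(x) + r̃(x))v; (3) l̃(x∘y)v = (l̃(x) + r̃(x))l̃(y)v = l̃(y)(l̃(x) + r̃(x))v. -/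
/-- `(l,r,V)` is a representation of a perm algebra `(A,∘)` iff the
triple `(l̃, r̃, V)` with `l̃ = 2l − r`, `r̃ = r − l` satisfies the listed identities. -/
theorem perm_representation_iff_tilde_conditions
    {K : Type*} [Field K] [CharZero K]
    {A : Type*} [AddCommGroup A] [Module K A]
    {V : Type*} [AddCommGroup V] [Module K V]
    (circ : A →ₗ[K] A →ₗ[K] A)
    (hperm : ∀ x y z : A,
      circ x (circ y z) = circ (circ x y) z ∧
      circ (circ x y) z = circ (circ y x) z)
    (l r : A →ₗ[K] V →ₗ[K] V) :
    let lt : A → V →ₗ[K] V := fun x => 2 • l x - r x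
    let rt : A → V →ₗ[K] V := fun x => r x - l x
    ((∀ x y : A, ∀ v : V,
        l (circ x y) v = l x (l y v) ∧
        l x (l y v) = l y (l x v) ∧
        r (circ x y) v = r y (r x v) ∧
        r y (r x v) = r y (l x v) ∧
        r y (l x v) = l x (r y v)) ↔
      (∀ x y : A, ∀ v : V,
        (lt y (rt x v) + 2 • rt y (rt x v) = 0) ∧
        (rt (circ x y) v = -(rt x (rt y v)) ∧
          -(rt x (rt y v)) = rt y (lt x v + rt x v)) ∧
        (lt (circ x y) v = lt x (lt y v) + rt x (lt y v) ∧
          lt x (lt y v) + rt x (lt y v) = lt y (lt x v + rt x v)))) := by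
  intro lt rt
  constructor
  · intro h x y v
    obtain ⟨A1, A2, A3, A4, A5⟩ := h x y v
    obtain ⟨B1, B2, B3, B4, B5⟩ := h y x v
    refine ⟨?_, ⟨?_, ?_⟩, ⟨?_, ?_⟩⟩ <;>
      simp only [lt, rt, LinearMap.sub_apply, LinearMap.smul_apply, LinearMap.add_apply,
        map_sub, map_add, map_smul, map_nsmul, smul_sub, smul_add]
    · linear_combination (norm := module) A4
    · linear_combination (norm := module) A3 - A1 + B4 + A4 + A5
    · linear_combination (norm := module) -B4 - A5 - A2
    · linear_combination (norm := module) (2:ℤ) • A1 - A3 - A4 - A5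
    · linear_combination (norm := module) (2:ℤ) • A2 + A5
  · intro h x y v
    have E4 : ∀ a b : A, ∀ w : V, r b (r a w) = r b (l a w) := by
      intro a b w
      have h1 := (h a b w).1
      simp only [lt, rt, LinearMap.sub_apply, LinearMap.smul_apply, LinearMap.add_apply,
        map_sub, map_add, map_smul, map_nsmul, smul_sub, smul_add] at h1
      linear_combination (norm := module) h1
    have h2a := (h x y v).2.1.1
    have h2b := (h x y v).2.1.2
    have h3a := (h x y v).2.2.1
    have h3b := (h x y v).2.2.2
    simp only [lt, rt, LinearMap.sub_apply, LinearMap.smul_apply, LinearMap.add_apply,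
      map_sub, map_add, map_smul, map_nsmul, smul_sub, smul_add] at h2a h2b h3a h3b
    -- (*) : r(x∘y)v - l(x∘y)v = l x (r y v) - l x (l y v)
    have hstar : r (circ x y) v - l (circ x y) v = l x (r y v) - l x (l y v) := by
      linear_combination (norm := module) h2a - E4 y x v
    -- (**) : l x (r y v) - l x (l y v) = r y (l x v) - l y (l x v)
    have hstar2 : l x (r y v) - l x (l y v) = r y (l x v) - l y (l x v) := by
      linear_combination (norm := module) h2b + E4 y x v
    -- (***) : 2 l(x∘y)v - r(x∘y)v = 2 l x (l y v) - l x (r y v)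
    have hstar3 : (2:ℤ) • l (circ x y) v - r (circ x y) v
        = (2:ℤ) • l x (l y v) - l x (r y v) := by
      linear_combination (norm := module) h3a
    -- (****)
    have hstar4 : (2:ℤ) • l x (l y v) - l x (r y v)
        = (2:ℤ) • l y (l x v) - r y (l x v) := by
      linear_combination (norm := module) h3b
    have id1 : l (circ x y) v = l x (l y v) := by
      linear_combination (norm := module) hstar + hstar3
    have id2 : l x (l y v) = l y (l x v) := by
      linear_combination (norm := module) hstar4 + hstar2
    have id5 : r y (l x v) = l x (r y v) := by
      linear_combination (norm := module) -hstar2 - id2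
    have id4 : r y (r x v) = r y (l x v) := E4 x y v
    have id3 : r (circ x y) v = r y (r x v) := by
      linear_combination (norm := module) hstar + id1 - id4 - id5
    exact ⟨id1, id2, id3, id4, id5⟩
end

section
/- Let (l,r,V) be a representation of a perm algebra (A,∘) over a field K of characteristic zero, with V finite-dimensional, and let T : V* → A be a dual a-O-operator of (A,∘) associated to (l,r,V). Define multiplications on V* by u*▷v* := (l* + r*)(T(u*))v* and u*◁v* := −r*(T(v*))u*. Then (V*,▷,◁) is an apre-perm algebra if and only if T is strong. -/
/-- for a dual a-O-operator `T : V* → A` of a perm algebra `(A,∘)`,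
the induced operations on `V*` form an apre-perm algebra iff `T` is strong. -/
theorem dual_aO_operator_apre_perm_iff_strong
    {K : Type*} [Field K] [CharZero K]
    {A : Type*} [AddCommGroup A] [Module K A]
    {V : Type*} [AddCommGroup V] [Module K V] [FiniteDimensional K V]
    (circ : A →ₗ[K] A →ₗ[K] A)
    (hperm : ∀ x y z : A,
      circ x (circ y z) = circ (circ x y) z ∧
      circ (circ x y) z = circ (circ y x) z)
    (l r : A →ₗ[K] V →ₗ[K] V)
    (hrep : ∀ x y : A, ∀ v : V,
      l (circ x y) v = l x (l y v) ∧
      l x (l y v) = l y (l x v) ∧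
      r (circ x y) v = r y (r x v) ∧
      r y (r x v) = r y (l x v) ∧
      r y (l x v) = l x (r y v))
    (T : Module.Dual K V →ₗ[K] A)
    (hT : ∀ u v : Module.Dual K V,
      circ (T u) (T v)
        = T (((l (T u)).dualMap + (r (T u)).dualMap) v - (r (T v)).dualMap u)) :
    let tr : Module.Dual K V → Module.Dual K V → Module.Dual K V :=
      fun u v => ((l (T u)).dualMap + (r (T u)).dualMap) v
    let tl : Module.Dual K V → Module.Dual K V → Module.Dual K V :=
      fun u v => -((r (T v)).dualMap u)
    (IsAprePerm tr tl ↔ IsPerm (fun u v => tr u v + tl u v)) := by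
  intro tr tl
  have hTc : ∀ u v : Module.Dual K V, T (tr u v + tl u v) = circ (T u) (T v) := by
    intro u v
    rw [hT u v]
    congr 1
    simp only [tr, tl, sub_eq_add_neg]
  simp only [tr, tl, LinearMap.add_apply] at hTc
  constructor
  · exact fun h => h.1
  · intro hp
    refine ⟨hp, ?_, ?_⟩
    · intro x y z
      constructor
      · show tr (tr x y + tl x y) z + tl z (tr x y + tl x y)
            = tr x (tr y z + tl z y) + tl (tr y z + tl z y) x
        ext w
        simp only [tr, tl, LinearMap.add_apply, LinearMap.neg_apply,
          LinearMap.dualMap_apply, hTc]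
        rw [(hrep (T x) (T y) w).1, (hrep (T x) (T y) w).2.1]; ring
      · show tr x (tr y z + tl z y) + tl (tr y z + tl z y) x
            = tr y (tr x z + tl z x) + tl (tr x z + tl z x) y
        ext w
        simp only [tr, tl, LinearMap.add_apply, LinearMap.neg_apply,
          LinearMap.dualMap_apply, hTc]
        rw [(hrep (T x) (T y) w).2.1]; ring
    · intro x y z
      refine ⟨?_, ?_, ?_⟩
      · show tl z (tr x y + tl x y) = -(tl (tl z y) x)
        ext w
        simp only [tr, tl, LinearMap.add_apply, LinearMap.neg_apply,
          LinearMap.dualMap_apply, hTc]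
        rw [(hrep (T x) (T y) w).2.2.1]; ring
      · show -(tl (tl z y) x) = tr x (tl z y) + tl (tl z y) x
        ext w
        simp only [tr, tl, LinearMap.add_apply, LinearMap.neg_apply,
          LinearMap.dualMap_apply, hTc]
        rw [(hrep (T x) (T y) w).2.2.2.1]; ring
      · show tr x (tl z y) + tl (tl z y) x = tl (tr x z + tl z x) y
        ext w
        simp only [tr, tl, LinearMap.add_apply, LinearMap.neg_apply,
          LinearMap.dualMap_apply, hTc]
        rw [(hrep (T x) (T y) w).2.2.2.2]; ring
end

section
/- Let (l,r,V) be a representation of a perm algebra (A,∘) over a field K of characteristic zero, with V finite-dimensional, and let T : V* → A be a dual a-O-operator of (A,∘) associated to (l,r,V). If T is a linear isomorphism, then T is strong, i.e., the multiplication u*∘v* := (l*+r*)(T(u*))v* − r*(T(v*))u* makes V* a perm algebra. -/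
/-- an invertible dual a-O-operator of a perm algebra is strong. -/
theorem invertible_dual_aO_operator_is_strong
    {K : Type*} [Field K] [CharZero K]
    {A : Type*} [AddCommGroup A] [Module K A]
    {V : Type*} [AddCommGroup V] [Module K V] [FiniteDimensional K V]
    (circ : A →ₗ[K] A →ₗ[K] A)
    (hperm : ∀ x y z : A,
      circ x (circ y z) = circ (circ x y) z ∧
      circ (circ x y) z = circ (circ y x) z)
    (l r : A →ₗ[K] V →ₗ[K] V)
    (hrep : ∀ x y : A, ∀ v : V,
      l (circ x y) v = l x (l y v) ∧
      l x (l y v) = l y (l x v) ∧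
      r (circ x y) v = r y (r x v) ∧
      r y (r x v) = r y (l x v) ∧
      r y (l x v) = l x (r y v))
    (T : Module.Dual K V →ₗ[K] A)
    (hT : ∀ u v : Module.Dual K V,
      circ (T u) (T v)
        = T (((l (T u)).dualMap + (r (T u)).dualMap) v - (r (T v)).dualMap u))
    (hbij : Function.Bijective T) :
    IsPerm (fun u v : Module.Dual K V =>
      ((l (T u)).dualMap + (r (T u)).dualMap) v - (r (T v)).dualMap u) := by
  intro x y z
  set m : Module.Dual K V → Module.Dual K V → Module.Dual K V := fun u v =>
    ((l (T u)).dualMap + (r (T u)).dualMap) v - (r (T v)).dualMap u with hm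
  have key : ∀ u v, T (m u v) = circ (T u) (T v) := fun u v => (hT u v).symm
  have h1 : T (m x (m y z)) = T (m (m x y) z) := by
    rw [key, key, key, key, (hperm (T x) (T y) (T z)).1]
  have h2 : T (m (m x y) z) = T (m (m y x) z) := by
    rw [key, key, key, key, (hperm (T x) (T y) (T z)).2]
  exact ⟨hbij.injective h1, hbij.injective h2⟩
end

section
/- Let (l,r,V) be a representation of a perm algebra (A,∘) over a field K of characteristic zero, with V finite-dimensional, and let T : V* → A be an invertible dual a-O-operator of (A,∘) associated to (l,r,V). Define multiplications on A by x▷y := T((l*+r*)(x)(T⁻¹(y))) and x◁y := −T(r*(y)(T⁻¹(x))). Then (A,▷,◁) is an apre-perm algebra and x▷y + x◁y = x∘y for all x,y ∈ A (i.e., (A,▷,◁) is a compatible apre-perm algebra structure on (A,∘)). -/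
/-- an invertible dual a-O-operator induces a compatible apre-perm
algebra structure on the perm algebra `(A,∘)`. -/
theorem invertible_dual_aO_operator_gives_compatible_apre_perm
    {K : Type*} [Field K] [CharZero K]
    {A : Type*} [AddCommGroup A] [Module K A]
    {V : Type*} [AddCommGroup V] [Module K V] [FiniteDimensional K V]
    (circ : A →ₗ[K] A →ₗ[K] A)
    (hperm : ∀ x y z : A,
      circ x (circ y z) = circ (circ x y) z ∧
      circ (circ x y) z = circ (circ y x) z)
    (l r : A →ₗ[K] V →ₗ[K] V)
    (hrep : ∀ x y : A, ∀ v : V,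
      l (circ x y) v = l x (l y v) ∧
      l x (l y v) = l y (l x v) ∧
      r (circ x y) v = r y (r x v) ∧
      r y (r x v) = r y (l x v) ∧
      r y (l x v) = l x (r y v))
    (T : Module.Dual K V ≃ₗ[K] A)
    (hT : ∀ u v : Module.Dual K V,
      circ (T u) (T v)
        = T (((l (T u)).dualMap + (r (T u)).dualMap) v - (r (T v)).dualMap u)) :
    let tr : A → A → A :=
      fun x y => T (((l x).dualMap + (r x).dualMap) (T.symm y))
    let tl : A → A → A :=
      fun x y => -T ((r y).dualMap (T.symm x))
    (IsAprePerm tr tl ∧ ∀ x y : A, tr x y + tl x y = circ x y) := by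
  intro tr tl
  -- compatibility: tr + tl = circ
  have hc : ∀ x y : A, tr x y + tl x y = circ x y := by
    intro x y
    have h := hT (T.symm x) (T.symm y)
    rw [T.apply_symm_apply, T.apply_symm_apply] at h
    rw [h, map_sub]
    simp [tr, tl, sub_eq_add_neg]
  -- b x y = T ((l x).dualMap (T.symm y))
  have hb : ∀ x y : A, tr x y + tl y x = T ((l x).dualMap (T.symm y)) := by
    intro x y
    simp only [tr, tl, LinearMap.add_apply, map_add]
    abel
  -- dual identities
  have hL : ∀ x y : A, ∀ φ : Module.Dual K V,
      (l (circ x y)).dualMap φ = (l x).dualMap ((l y).dualMap φ) := by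
    intro x y φ; ext v
    simp only [LinearMap.dualMap_apply, LinearMap.dualMap_apply', LinearMap.comp_apply]
    exact congrArg φ ((hrep x y v).1.trans (hrep x y v).2.1)
  have hLcomm : ∀ x y : A, ∀ φ : Module.Dual K V,
      (l x).dualMap ((l y).dualMap φ) = (l y).dualMap ((l x).dualMap φ) := by
    intro x y φ; ext v
    simp only [LinearMap.dualMap_apply, LinearMap.dualMap_apply', LinearMap.comp_apply]
    exact congrArg φ (hrep y x v).2.1
  have hR : ∀ x y : A, ∀ φ : Module.Dual K V,
      (r (circ x y)).dualMap φ = (r x).dualMap ((r y).dualMap φ) := by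
    intro x y φ; ext v
    simp only [LinearMap.dualMap_apply, LinearMap.dualMap_apply', LinearMap.comp_apply]
    exact congrArg φ (hrep x y v).2.2.1
  have hRL : ∀ x y : A, ∀ φ : Module.Dual K V,
      (r x).dualMap ((r y).dualMap φ) = (l x).dualMap ((r y).dualMap φ) := by
    intro x y φ; ext v
    simp only [LinearMap.dualMap_apply, LinearMap.dualMap_apply', LinearMap.comp_apply]
    exact congrArg φ (hrep x y v).2.2.2.1
  have hLR : ∀ x y : A, ∀ φ : Module.Dual K V,
      (l x).dualMap ((r y).dualMap φ) = (r y).dualMap ((l x).dualMap φ) := by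
    intro x y φ; ext v
    simp only [LinearMap.dualMap_apply, LinearMap.dualMap_apply', LinearMap.comp_apply]
    exact congrArg φ (hrep x y v).2.2.2.2
  refine ⟨⟨?_, ?_, ?_⟩, hc⟩
  · -- IsPerm
    intro x y z
    simp only [hc]
    exact hperm x y z
  · -- b identities
    intro x y z
    simp only [hc]
    simp only [hb]
    simp only [T.symm_apply_apply]
    constructor
    · exact congrArg T (hL x y (T.symm z))
    · exact congrArg T (hLcomm x y (T.symm z))
  · -- tl identities
    intro x y z
    simp only [hc]
    simp only [hb]
    simp only [tl, map_neg, T.symm_apply_apply, neg_neg]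
    refine ⟨?_, ?_, ?_⟩
    · exact congrArg (fun a => -T a) (hR x y (T.symm z))
    · exact congrArg (fun a => -T a) (hRL x y (T.symm z))
    · exact congrArg (fun a => -T a) (hLR x y (T.symm z))
end

section
/- Let (A,∘) be a finite-dimensional perm algebra over a field K of characteristic zero and B a nondegenerate bilinear form on A satisfying B(x∘y,z) = B(y,x∘z + z∘x) − B(x,z∘y) for all x,y,z ∈ A. Let ▷ and ◁ be the bilinear multiplications on A determined by B(x▷y,z) = B(y,x∘z + z∘x) and B(x◁y,z) = −B(x,z∘y) for all x,y,z ∈ A. Then (A,▷,◁) is an apre-perm algebra and x▷y + x◁y = x∘y for all x,y ∈ A. -/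
/-- a nondegenerate bilinear form satisfying
`B(x∘y,z) = B(y, x∘z + z∘x) − B(x, z∘y)` on a perm algebra induces a compatible
apre-perm algebra structure. -/
theorem nondegenerate_form_gives_compatible_apre_perm
    {K : Type*} [Field K] [CharZero K]
    {A : Type*} [AddCommGroup A] [Module K A] [FiniteDimensional K A]
    (circ : A →ₗ[K] A →ₗ[K] A)
    (hperm : ∀ x y z : A,
      circ x (circ y z) = circ (circ x y) z ∧
      circ (circ x y) z = circ (circ y x) z)
    (B : A →ₗ[K] A →ₗ[K] K)
    (hnd₁ : ∀ x : A, (∀ y : A, B x y = 0) → x = 0)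
    (hnd₂ : ∀ y : A, (∀ x : A, B x y = 0) → y = 0)
    (hB : ∀ x y z : A,
      B (circ x y) z = B y (circ x z + circ z x) - B x (circ z y))
    (rt lt : A →ₗ[K] A →ₗ[K] A)
    (hrt : ∀ x y z : A, B (rt x y) z = B y (circ x z + circ z x))
    (hlt : ∀ x y z : A, B (lt x y) z = -B x (circ z y)) :
    IsAprePerm (fun x y => rt x y) (fun x y => lt x y) ∧
      ∀ x y : A, rt x y + lt x y = circ x y := by
  have ext : ∀ u v : A, (∀ z, B u z = B v z) → u = v := by
    intro u v h
    have h0 : ∀ y, B (u - v) y = 0 := by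
      intro y; rw [map_sub, LinearMap.sub_apply, h y, sub_self]
    exact sub_eq_zero.mp (hnd₁ (u - v) h0)
  have p1 : ∀ x y z : A, circ x (circ y z) = circ (circ x y) z :=
    fun x y z => (hperm x y z).1
  have p2 : ∀ x y z : A, circ (circ x y) z = circ (circ y x) z :=
    fun x y z => (hperm x y z).2
  have keq : ∀ x y : A, rt x y + lt x y = circ x y := by
    intro x y; apply ext; intro z
    rw [map_add, LinearMap.add_apply, hrt, hlt, hB]
    ring
  have hb : ∀ x y z : A, B (rt x y + lt y x) z = B y (circ x z) := by
    intro x y z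
    rw [map_add, LinearMap.add_apply, hrt, hlt, map_add]
    ring
  refine ⟨⟨?_, ?_, ?_⟩, keq⟩
  · intro x y z
    simp only [keq]
    exact hperm x y z
  · intro x y z
    simp only [keq]
    constructor
    · apply ext; intro w
      rw [hb, hb, hb, p1, p2, ← p1]
    · apply ext; intro w
      rw [hb, hb, hb, hb, p1, p1, p2]
  · intro x y z
    simp only [keq]
    refine ⟨?_, ?_, ?_⟩
    · apply ext; intro w
      rw [map_neg, LinearMap.neg_apply, hlt, hlt, hlt, p1]
      ring
    · apply ext; intro w
      rw [map_neg, LinearMap.neg_apply, hlt, hlt, hb, hlt, p2]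
      ring
    · apply ext; intro w
      rw [hb, hlt, hlt, hb, p1]
end

section
/- Let (A,∘) be a finite-dimensional perm algebra over a field K of characteristic zero and B a nondegenerate bilinear form on A satisfying B(x∘y,z) = B(y,x∘z) = B(x∘z,y) for all x,y,z ∈ A. Let ▷ and ◁ be the bilinear multiplications on A determined by B(x▷y,z) = B(y,x∘z + z∘x) and B(x◁y,z) = −B(x,z∘y) for all x,y,z ∈ A. Then (A,▷,◁) is a special apre-perm algebra (i.e., an apre-perm algebra with ◁ commutative) and x▷y + x◁y = x∘y for all x,y ∈ A. -/
/-- A special apre-perm algebra is an apre-perm algebra with `◁` commutative. -/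
def IsSpecialAprePerm {A : Type*} [AddCommGroup A] (tr tl : A → A → A) : Prop :=
  IsAprePerm tr tl ∧ ∀ x y : A, tl x y = tl y x

/-- a nondegenerate bilinear form satisfying
`B(x∘y,z) = B(y,x∘z) = B(x∘z,y)` on a perm algebra induces a compatible special
apre-perm algebra structure. -/
theorem nondegenerate_form_gives_compatible_special_apre_perm
    {K : Type*} [Field K] [CharZero K]
    {A : Type*} [AddCommGroup A] [Module K A] [FiniteDimensional K A]
    (circ : A →ₗ[K] A →ₗ[K] A)
    (hperm : ∀ x y z : A,
      circ x (circ y z) = circ (circ x y) z ∧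
      circ (circ x y) z = circ (circ y x) z)
    (B : A →ₗ[K] A →ₗ[K] K)
    (hnd₁ : ∀ x : A, (∀ y : A, B x y = 0) → x = 0)
    (hnd₂ : ∀ y : A, (∀ x : A, B x y = 0) → y = 0)
    (hB : ∀ x y z : A,
      B (circ x y) z = B y (circ x z) ∧ B y (circ x z) = B (circ x z) y)
    (rt lt : A →ₗ[K] A →ₗ[K] A)
    (hrt : ∀ x y z : A, B (rt x y) z = B y (circ x z + circ z x))
    (hlt : ∀ x y z : A, B (lt x y) z = -B x (circ z y)) :
    IsSpecialAprePerm (fun x y => rt x y) (fun x y => lt x y) ∧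
      ∀ x y : A, rt x y + lt x y = circ x y := by
  have hext : ∀ u v : A, (∀ w : A, B u w = B v w) → u = v := by
    intro u v h
    refine sub_eq_zero.mp (hnd₁ _ ?_)
    intro w
    simp [map_sub, LinearMap.sub_apply, h w]
  have h1 : ∀ x y z : A, B (circ x y) z = B y (circ x z) := fun x y z => (hB x y z).1
  have hswap : ∀ x y z : A, B y (circ z x) = B x (circ z y) := by
    intro x y z
    rw [(hB z y x).2]
    exact h1 z x y
  have hbul : ∀ x y w : A, B (rt x y + lt y x) w = B y (circ x w) := by
    intro x y w
    have e1 := hrt x y w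
    have e2 := hlt y x w
    simp only [map_add, LinearMap.add_apply] at *
    linear_combination e1 + e2
  have hcompat : ∀ x y : A, rt x y + lt x y = circ x y := by
    intro x y
    apply hext
    intro w
    have e1 := hrt x y w
    have e2 := hlt x y w
    have e3 := hswap x y w
    have e4 := h1 x y w
    simp only [map_add, LinearMap.add_apply] at *
    linear_combination e1 + e2 + e3 - e4
  refine ⟨⟨⟨?_, ?_, ?_⟩, ?_⟩, hcompat⟩
  · -- IsPerm
    intro x y z
    simp only [hcompat]
    exact hperm x y z
  · -- b identities
    intro x y z
    simp only [hcompat]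
    constructor
    · apply hext
      intro w
      simp only [hbul]
      rw [(hperm y x w).1, ← (hperm x y w).2]
    · apply hext
      intro w
      simp only [hbul]
      rw [(hperm y x w).1, (hperm x y w).1, (hperm x y w).2]
  · -- lt identities
    intro x y z
    simp only [hcompat]
    refine ⟨?_, ?_, ?_⟩
    · apply hext
      intro w
      simp only [map_neg, LinearMap.neg_apply, hlt, neg_neg]
      rw [(hperm w x y).1]
    · apply hext
      intro w
      simp only [map_neg, LinearMap.neg_apply, hlt, hbul, neg_neg]
      rw [(hperm w x y).2]
    · apply hext
      intro w
      simp only [hlt, hbul]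
      rw [(hperm x w y).1]
  · -- comm of lt
    intro x y
    apply hext
    intro w
    rw [hlt, hlt, hswap]
end

section
/- Let A be a vector space over a field K of characteristic zero with bilinear multiplications ▷ and ◁, and set x∘y := x▷y + x◁y. Then (A,▷,◁) is a special apre-perm algebra if and only if ◁ is commutative, (A,∘) is a perm algebra, and (x∘y)◁z = x∘(y◁z) = −x◁(y◁z) for all x,y,z ∈ A. -/
/-- `(A,▷,◁)` is a special apre-perm algebra iff `◁` is commutative,
`(A,∘)` is a perm algebra and `(x∘y)◁z = x∘(y◁z) = −x◁(y◁z)`. -/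
theorem special_apre_perm_characterization
    {K : Type*} [Field K] [CharZero K]
    {A : Type*} [AddCommGroup A] [Module K A]
    (rt lt : A →ₗ[K] A →ₗ[K] A) :
    let circ : A → A → A := fun x y => rt x y + lt x y
    (IsSpecialAprePerm (fun x y => rt x y) (fun x y => lt x y) ↔
      ((∀ x y : A, lt x y = lt y x) ∧
        IsPerm circ ∧
        ∀ x y z : A,
          lt (circ x y) z = circ x (lt y z) ∧
          circ x (lt y z) = -(lt x (lt y z)))) := by
  intro circ
  simp only [IsSpecialAprePerm, IsAprePerm]
  constructor
  · rintro ⟨⟨hperm, _hb, hl⟩, hcomm⟩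
    refine ⟨hcomm, hperm, fun x y z => ?_⟩
    obtain ⟨h1, h2, _h3⟩ := hl x y z
    rw [hcomm z y, hcomm (lt y z) x] at h1 h2
    have hc2 : circ x (lt y z) = -(lt x (lt y z)) := by
      show rt x (lt y z) + lt x (lt y z) = _
      exact h2.symm
    refine ⟨?_, hc2⟩
    rw [hc2, ← h1, hcomm]
  · rintro ⟨hcomm, hperm, h⟩
    have hbc : ∀ x y : A, rt x y + lt y x = rt x y + lt x y := fun x y => by
      rw [hcomm]
    have hc2 : ∀ x y z : A, circ x (lt y z) = -(lt x (lt y z)) := fun x y z =>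
      (h x y z).2
    refine ⟨⟨hperm, fun x y z => ?_, fun x y z => ?_⟩, hcomm⟩
    · constructor
      · rw [hcomm z (rt x y + lt x y), hcomm z y, hcomm (rt y z + lt y z) x]
        exact (hperm x y z).1.symm
      · rw [hcomm z y, hcomm (rt y z + lt y z) x, hcomm z x,
          hcomm (rt x z + lt x z) y]
        exact ((hperm x y z).1.trans (hperm x y z).2).trans (hperm y x z).1.symm
    · constructor
      · rw [hcomm z (circ x y), (h x y z).1, hc2, hcomm z y, hcomm (lt y z) x]
      · constructor
        · rw [hbc, hcomm (lt z y) x]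
          exact (hc2 x z y).symm
        · rw [hbc x (lt z y), hbc x z]
          exact ((h x z y).1).symm
end

section
/- Let (A,·,P,Q) be an admissible averaging commutative algebra over a field K of characteristic zero. Define multiplications on A by x▷y := P(x)·y + Q(x·y) and x◁y := −Q(x·y). Then (A,▷,◁) is a special apre-perm algebra. -/
/-- an admissible averaging commutative algebra `(A,·,P,Q)` gives a
special apre-perm algebra with `x▷y := P(x)·y + Q(x·y)` and `x◁y := −Q(x·y)`. -/
theorem admissible_averaging_gives_special_apre_perm
    {K : Type*} [Field K] [CharZero K]
    {A : Type*} [AddCommGroup A] [Module K A]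
    (mul : A →ₗ[K] A →ₗ[K] A)
    (hcomm : ∀ x y : A, mul x y = mul y x)
    (hassoc : ∀ x y z : A, mul (mul x y) z = mul x (mul y z))
    (P Q : A →ₗ[K] A)
    (havg : ∀ x y : A, mul (P x) (P y) = P (mul (P x) y))
    (hadm : ∀ x y : A,
      mul (P x) (Q y) = Q (mul (P x) y) ∧ Q (mul (P x) y) = Q (mul x (Q y))) :
    IsSpecialAprePerm
      (fun x y => mul (P x) y + Q (mul x y))
      (fun x y => -Q (mul x y)) := by
  -- both ∘ and • reduce to (x,y) ↦ P(x)·y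
  have hc : ∀ x y : A,
      (mul (P x) y + Q (mul x y)) + -Q (mul x y) = mul (P x) y := by
    intro x y; abel
  have hb : ∀ x y : A,
      (mul (P x) y + Q (mul x y)) + -Q (mul y x) = mul (P x) y := by
    intro x y; rw [hcomm y x]; abel
  -- key associativity facts
  have key : ∀ x y z : A, mul (P x) (mul (P y) z) = mul (P (mul (P x) y)) z := by
    intro x y z
    rw [← hassoc, havg]
  have keyc : ∀ x y z : A, mul (P (mul (P x) y)) z = mul (P (mul (P y) x)) z := by
    intro x y z
    rw [← havg, hcomm (P x) (P y), havg]
  have hswap : ∀ x y z : A, mul (P x) (mul (P y) z) = mul (P y) (mul (P x) z) := by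
    intro x y z
    rw [key, keyc, ← key]
  refine ⟨⟨?_, ?_, ?_⟩, ?_⟩
  · intro x y z
    simp only [hc]
    exact ⟨key x y z, keyc x y z⟩
  · intro x y z
    simp only [hb, hc]
    exact ⟨(key x y z).symm, hswap x y z⟩
  · intro x y z
    simp only [hb, hc, map_neg, LinearMap.neg_apply, neg_neg, neg_inj]
    refine ⟨?_, ?_, ?_⟩
    · rw [hcomm z (mul (P x) y), hassoc, hcomm y z, (hadm x (mul z y)).2,
        hcomm x (Q (mul z y))]
    · rw [(hadm x (mul z y)).1, (hadm x (mul z y)).2, hcomm x (Q (mul z y))]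
      abel
    · rw [(hadm x (mul z y)).1, hcomm x (Q (mul z y)), hassoc]
      abel
  · intro x y
    simp only [hcomm x y]
end

section
/- Let K be a field of characteristic zero. (1) Let (A,∘) be a finite-dimensional perm algebra over K and B a nondegenerate symmetric left-invariant bilinear form on (A,∘). Let ◁ be the bilinear multiplication determined by B(x◁y,z) = −B(x,z∘y) for all x,y,z ∈ A, and set x▷y := x∘y − x◁y. Then (A,▷,◁) is a special apre-perm algebra and B is invariant on it (i.e., (A,▷,◁,B) is a quadratic special apre-perm algebra). (2) Conversely, let (A,▷,◁,B) be a quadratic special apre-perm algebra over K. Then B is left-invariant on the associated perm algebra (A,∘) with x∘y := x▷y + x◁y. -/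
universe u

/-- one-to-one correspondence between perm algebras with nondegenerate
symmetric left-invariant bilinear forms and quadratic special apre-perm algebras.
Part (1): such a form on a perm algebra yields a quadratic special apre-perm algebra.
Part (2): conversely, the form of a quadratic special apre-perm algebra is
left-invariant on the associated perm algebra. -/
theorem perm_left_invariant_correspondence_quadratic_special_apre_perm
    {K : Type u} [Field K] [CharZero K] :
    (∀ (A : Type u) [AddCommGroup A] [Module K A] [FiniteDimensional K A]
        (circ : A →ₗ[K] A →ₗ[K] A),
      (∀ x y z : A,
          circ x (circ y z) = circ (circ x y) z ∧
          circ (circ x y) z = circ (circ y x) z) →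
      ∀ (B : A →ₗ[K] A →ₗ[K] K),
      (∀ x : A, (∀ y : A, B x y = 0) → x = 0) →
      (∀ y : A, (∀ x : A, B x y = 0) → y = 0) →
      (∀ x y : A, B x y = B y x) →
      (∀ x y z : A, B (circ x y) z = B y (circ x z)) →
      ∀ (lt : A →ₗ[K] A →ₗ[K] A),
      (∀ x y z : A, B (lt x y) z = -B x (circ z y)) →
      (IsSpecialAprePerm (fun x y => circ x y - lt x y) (fun x y => lt x y) ∧
        ∀ x y z : A,
          B (lt x y) z = -B x ((circ z y - lt z y) + lt z y))) ∧
    (∀ (A : Type u) [AddCommGroup A] [Module K A]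
        (rt lt : A →ₗ[K] A →ₗ[K] A) (B : A →ₗ[K] A →ₗ[K] K),
      IsSpecialAprePerm (fun x y => rt x y) (fun x y => lt x y) →
      (∀ x : A, (∀ y : A, B x y = 0) → x = 0) →
      (∀ y : A, (∀ x : A, B x y = 0) → y = 0) →
      (∀ x y : A, B x y = B y x) →
      (∀ x y z : A, B (lt x y) z = -B x (rt z y + lt z y)) →
      ∀ x y z : A,
        B (rt x y + lt x y) z = B y (rt x z + lt x z)) := by
  constructor
  · intro A _ _ _ circ hperm B hnd1 _hnd2 hsym hLI lt hlt
    -- extensionality from nondegeneracy in the first argument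
    have ext1 : ∀ a b : A, (∀ z : A, B a z = B b z) → a = b := by
      intro a b h
      have : a - b = 0 := by
        apply hnd1
        intro ygen
        have := h ygen
        simp [map_sub, this]
      exact sub_eq_zero.mp this
    -- commutativity of lt
    have hcomm : ∀ x y : A, lt x y = lt y x := by
      intro x y
      apply ext1
      intro z
      rw [hlt x y z, hlt y x z, hsym x (circ z y), hLI z y x]
    -- three key identities
    have key1 : ∀ x y z : A, lt z (circ x y) = -(lt (lt z y) x) := by
      intro x y z
      apply ext1
      intro w
      have h1 : B (-(lt (lt z y) x)) w = B (lt z y) (circ w x) := by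
        rw [map_neg, LinearMap.neg_apply, hlt (lt z y) x w, neg_neg]
      rw [h1, hlt z (circ x y) w, hlt z y (circ w x), (hperm w x y).1]
    have key2 : ∀ x y z : A, -(lt (lt z y) x) = circ x (lt z y) := by
      intro x y z
      apply ext1
      intro w
      have h1 : B (-(lt (lt z y) x)) w = B (lt z y) (circ w x) := by
        rw [map_neg, LinearMap.neg_apply, hlt (lt z y) x w, neg_neg]
      rw [h1, hLI x (lt z y) w, hlt z y (circ w x), hlt z y (circ x w),
        (hperm w x y).2]
    have key3 : ∀ x y z : A, circ x (lt z y) = lt (circ x z) y := by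
      intro x y z
      apply ext1
      intro w
      rw [hLI x (lt z y) w, hlt z y (circ x w), hlt (circ x z) y w,
        hLI x z (circ w y), (hperm x w y).1]
    refine ⟨⟨⟨?_, ?_, ?_⟩, ?_⟩, ?_⟩
    · -- IsPerm
      intro x y z
      simp only [sub_add_cancel]
      exact hperm x y z
    · -- bullet identities
      intro x y z
      have hb : ∀ u v : A, circ u v - lt u v + lt v u = circ u v := by
        intro u v; rw [hcomm v u, sub_add_cancel]
      simp only [sub_add_cancel, hb]
      refine ⟨(hperm x y z).1.symm, ?_⟩
      rw [(hperm x y z).1, (hperm x y z).2, ← (hperm y x z).1]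
    · -- tl identities
      intro x y z
      have hb : ∀ u v : A, circ u v - lt u v + lt v u = circ u v := by
        intro u v; rw [hcomm v u, sub_add_cancel]
      simp only [sub_add_cancel, hb]
      exact ⟨key1 x y z, key2 x y z, key3 x y z⟩
    · -- speciality
      exact hcomm
    · -- invariance restated
      intro x y z
      rw [sub_add_cancel]
      exact hlt x y z
  · intro A _ _ rt lt B hS _hnd1 _hnd2 hsym hinv x y z
    have hcomm : ∀ u v : A, lt u v = lt v u := hS.2
    have star : ∀ a b c : A, B a (rt c b + lt c b) = B b (rt c a + lt c a) := by
      intro a b c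
      have h1 := hinv a b c
      have h2 := hinv b a c
      rw [hcomm a b] at h1
      rw [h2] at h1
      exact (neg_inj.mp h1).symm
    rw [hsym (rt x y + lt x y) z, star z y x]
end

section
/- Let (A,·) be a commutative associative algebra over a field K of characteristic zero, B a nondegenerate symmetric invariant bilinear form on (A,·), P an averaging operator on (A,·), and P̂ : A → A the linear map satisfying B(P(x),y) = B(x,P̂(y)) for all x,y ∈ A. Define x∘y := P(x)·y, x▷y := P(x)·y + P̂(x·y), and x◁y := −P̂(x·y). Then (A,▷,◁) is a special apre-perm algebra with x▷y + x◁y = x∘y for all x,y ∈ A, and B is invariant on (A,▷,◁) (so (A,▷,◁,B) is a quadratic special apre-perm algebra). -/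
/-- a symmetric Frobenius commutative algebra with an averaging
operator yields a quadratic special apre-perm algebra via
`x▷y := P(x)·y + P̂(x·y)` and `x◁y := −P̂(x·y)`, compatible with `x∘y := P(x)·y`. -/
theorem frobenius_averaging_gives_quadratic_special_apre_perm
    {K : Type*} [Field K] [CharZero K]
    {A : Type*} [AddCommGroup A] [Module K A]
    (mul : A →ₗ[K] A →ₗ[K] A)
    (hcomm : ∀ x y : A, mul x y = mul y x)
    (hassoc : ∀ x y z : A, mul (mul x y) z = mul x (mul y z))
    (B : A →ₗ[K] A →ₗ[K] K)
    (hnd₁ : ∀ x : A, (∀ y : A, B x y = 0) → x = 0)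
    (hnd₂ : ∀ y : A, (∀ x : A, B x y = 0) → y = 0)
    (hsymm : ∀ x y : A, B x y = B y x)
    (hinv : ∀ x y z : A, B (mul x y) z = B x (mul y z))
    (P Phat : A →ₗ[K] A)
    (havg : ∀ x y : A, mul (P x) (P y) = P (mul (P x) y))
    (hadj : ∀ x y : A, B (P x) y = B x (Phat y)) :
    let tr : A → A → A := fun x y => mul (P x) y + Phat (mul x y)
    let tl : A → A → A := fun x y => -Phat (mul x y)
    (IsSpecialAprePerm tr tl ∧
      (∀ x y : A, tr x y + tl x y = mul (P x) y) ∧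
      (∀ x y z : A, B (tl x y) z = -B x (tr z y + tl z y))) := by
  intro tr tl
  -- equality from nondegeneracy in the second argument
  have eqB : ∀ a b : A, (∀ v : A, B v a = B v b) → a = b := by
    intro a b h
    have h0 : ∀ v : A, B v (a - b) = 0 := by
      intro v; rw [map_sub, h v, sub_self]
    have := hnd₂ (a - b) h0
    exact sub_eq_zero.mp this
  -- common right-hand side for the key identities
  have keyaux : ∀ (x w v : A), B (P (mul (P v) x)) w = B (P v) (mul (P x) w) := by
    intro x w v
    rw [← havg v x, hinv]
  have keyA : ∀ x w : A, Phat (mul (P x) w) = mul (P x) (Phat w) := by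
    intro x w
    apply eqB
    intro v
    have e1 : B v (Phat (mul (P x) w)) = B (P v) (mul (P x) w) := (hadj v _).symm
    have e2 : B v (mul (P x) (Phat w)) = B (P (mul (P v) x)) w := by
      rw [← hinv v (P x) (Phat w), hcomm v (P x), ← hadj (mul (P x) v) w,
        ← havg x v, hcomm (P x) (P v), havg v x]
    rw [e1, e2, keyaux]
  have keyB : ∀ x w : A, Phat (mul x (Phat w)) = mul (P x) (Phat w) := by
    intro x w
    apply eqB
    intro v
    have e1 : B v (Phat (mul x (Phat w))) = B (P (mul (P v) x)) w := by
      rw [← hadj v (mul x (Phat w)), ← hinv (P v) x (Phat w),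
        ← hadj (mul (P v) x) w]
    have e2 : B v (mul (P x) (Phat w)) = B (P (mul (P v) x)) w := by
      rw [← hinv v (P x) (Phat w), hcomm v (P x), ← hadj (mul (P x) v) w,
        ← havg x v, hcomm (P x) (P v), havg v x]
    rw [e1, e2]
  -- the sum collapses: tr x y + tl x y = P x · y
  have csum : ∀ x y : A, tr x y + tl x y = mul (P x) y := by
    intro x y
    show mul (P x) y + Phat (mul x y) + -Phat (mul x y) = mul (P x) y
    abel
  have bsum : ∀ x y : A, tr x y + tl y x = mul (P x) y := by
    intro x y
    show mul (P x) y + Phat (mul x y) + -Phat (mul y x) = mul (P x) y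
    rw [hcomm y x]; abel
  -- perm property of ∘
  have hPmul : ∀ x y : A, P (mul (P x) y) = P (mul (P y) x) := by
    intro x y
    rw [← havg, ← havg, hcomm]
  have hperm1 : ∀ x y z : A,
      mul (P x) (mul (P y) z) = mul (P (mul (P x) y)) z := by
    intro x y z
    rw [← havg, hassoc]
  refine ⟨⟨⟨?_, ?_, ?_⟩, ?_⟩, csum, ?_⟩
  · -- IsPerm c
    intro x y z
    simp only [csum]
    constructor
    · rw [hperm1]
    · rw [hPmul]
  · -- middle identities (b = c here)
    intro x y z
    simp only [csum, bsum]
    constructor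
    · exact (hperm1 x y z).symm
    · rw [hperm1 x y z, hperm1 y x z, hPmul]
  · -- left-multiplication identities
    intro x y z
    simp only [csum, bsum]
    have h1 : tl z (mul (P x) y) = -(mul (P x) (Phat (mul z y))) := by
      show -Phat (mul z (mul (P x) y)) = _
      rw [hcomm z (mul (P x) y), hassoc, hcomm y z, keyA]
    have h2 : -(tl (tl z y) x) = -(mul (P x) (Phat (mul z y))) := by
      show -(-Phat (mul (-Phat (mul z y)) x)) = _
      rw [map_neg, LinearMap.neg_apply, map_neg, neg_neg, hcomm, keyB]
    have h3 : mul (P x) (tl z y) = -(mul (P x) (Phat (mul z y))) := by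
      show mul (P x) (-Phat (mul z y)) = _
      rw [map_neg]
    have h4 : tl (mul (P x) z) y = -(mul (P x) (Phat (mul z y))) := by
      show -Phat (mul (mul (P x) z) y) = _
      rw [hassoc, keyA]
    exact ⟨h1.trans h2.symm, h2.trans h3.symm, h3.trans h4.symm⟩
  · -- tl is commutative
    intro x y
    show -Phat (mul x y) = -Phat (mul y x)
    rw [hcomm]
  · -- invariance of B
    intro x y z
    rw [csum]
    show B (-Phat (mul x y)) z = -B x (mul (P z) y)
    rw [map_neg, LinearMap.neg_apply, neg_inj, hsymm, ← hadj, hsymm, hinv,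
      hcomm y (P z)]
end

section
/- Let (A,▷,◁) be a special apre-perm algebra over a field K of characteristic zero. Then (A,▷) is a pre-Lie algebra, and the multiplication x⋄y := x▷y + 2(x◁y) makes (A,⋄) an anti-pre-Lie algebra. -/
/-- a special apre-perm algebra `(A,▷,◁)` gives a pre-Lie algebra
`(A,▷)` and an anti-pre-Lie algebra `(A, ⋄)` with `x⋄y := x▷y + 2(x◁y)`. -/
theorem special_apre_perm_gives_preLie_and_antiPreLie
    {K : Type*} [Field K] [CharZero K]
    {A : Type*} [AddCommGroup A] [Module K A]
    (rt lt : A →ₗ[K] A →ₗ[K] A)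
    (h : IsSpecialAprePerm (fun x y => rt x y) (fun x y => lt x y)) :
    let d : A → A → A := fun x y => rt x y + 2 • lt x y
    let br : A → A → A := fun x y => d x y - d y x
    ((∀ x y z : A,
        rt (rt x y) z - rt x (rt y z) = rt (rt y x) z - rt y (rt x z)) ∧
      (∀ x y z : A,
        br (br x y) z + br (br y z) x + br (br z x) y = 0) ∧
      (∀ x y z : A,
        d x (d y z) - d y (d x z) = d (br y x) z)) := by
  obtain ⟨⟨hP, hB, hL⟩, hcomm0⟩ := h
  have hcomm : ∀ x y : A, lt x y = lt y x := fun x y => hcomm0 x y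
  -- base pointwise lemmas
  have hP1 : ∀ x y z : A, rt x (rt y z + lt y z) + lt x (rt y z + lt y z)
      = rt (rt x y + lt x y) z + lt (rt x y + lt x y) z := fun x y z => (hP x y z).1
  have hP2 : ∀ x y z : A, rt (rt x y + lt x y) z + lt (rt x y + lt x y) z
      = rt (rt y x + lt y x) z + lt (rt y x + lt y x) z := fun x y z => (hP x y z).2
  have hA1 : ∀ x y z : A, lt z (rt x y + lt x y) = -(lt (lt z y) x) :=
    fun x y z => (hL x y z).1
  have hA2 : ∀ x y z : A, -(lt (lt z y) x) = rt x (lt z y) + lt (lt z y) x :=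
    fun x y z => (hL x y z).2.1
  have hA3 : ∀ x y z : A, rt x (lt z y) + lt (lt z y) x = lt (rt x z + lt z x) y :=
    fun x y z => (hL x y z).2.2
  -- a packaged copy `C = rt + lt` of the perm multiplication
  obtain ⟨C, hC⟩ : ∃ C : A →ₗ[K] A →ₗ[K] A, C = rt + lt := ⟨_, rfl⟩
  have hCapp : ∀ a b : A, C a b = rt a b + lt a b := by
    intro a b; rw [hC]; simp
  -- perm identities for C
  have CP1 : ∀ x y z : A, C x (C y z) = C (C x y) z := by
    intro x y z; simp only [hCapp]; exact hP1 x y z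
  have CP2 : ∀ x y z : A, C (C x y) z = C (C y x) z := by
    intro x y z; simp only [hCapp]; exact hP2 x y z
  -- ◁-reduction identities at the C-level
  have CF1 : ∀ x y z : A, lt x (lt y z) = -(lt z (C x y)) := by
    intro x y z
    have h1 := hA1 x y z
    rw [hcomm (lt z y) x, hcomm z y] at h1
    rw [hCapp, h1, neg_neg]
  have CF2 : ∀ x y z : A, C x (lt y z) = lt z (C x y) := by
    intro x y z
    have h2 := (hA1 x y z).trans (hA2 x y z)
    rw [hcomm (lt z y) x, hcomm z y] at h2
    rw [hCapp x (lt y z), hCapp x y]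
    exact h2.symm
  have CF3 : ∀ x y z : A, lt x (C y z) = lt z (C y x) := by
    intro x y z
    have h3 := ((hA1 y x z).trans (hA2 y x z)).trans (hA3 y x z)
    -- h3 : lt z (rt y x + lt y x) = lt (rt y z + lt z y) x
    rw [hcomm z y] at h3
    rw [hcomm (rt y z + lt y z) x] at h3
    rw [hCapp y z, hCapp y x]
    exact (h3.symm).trans (by rw [hcomm z (rt y x + lt y x)])
  -- expanded (rt/lt-level) reduction identities
  have S2 : ∀ x y z : A, lt x (lt y z) = -(lt z (rt x y)) - lt z (lt x y) := by
    intro x y z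
    have h1 := hA1 x y z
    rw [map_add, hcomm (lt z y) x, hcomm z y] at h1
    linear_combination (norm := abel) h1
  have S1 : ∀ x y z : A, rt x (lt y z)
      = lt z (rt x y) + lt z (rt x y) + lt z (lt x y) + lt z (lt x y) := by
    intro x y z
    have h2 := (hA1 x y z).trans (hA2 x y z)
    rw [map_add, hcomm (lt z y) x, hcomm z y] at h2
    linear_combination (norm := abel) - h2 - S2 x y z
  have hChain : ∀ x y z : A, lt z (rt x y) + lt z (lt x y) = lt y (rt x z) + lt y (lt x z) := by
    intro x y z
    have h3 := ((hA1 x y z).trans (hA2 x y z)).trans (hA3 x y z)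
    simp only [map_add, LinearMap.add_apply] at h3
    rw [hcomm (rt x z) y, hcomm (lt z x) y, hcomm z x] at h3
    exact h3
  have S3 : ∀ x y z : A, lt x (rt y z)
      = lt z (rt y x) + lt z (lt y x) + lt z (rt x y) + lt z (lt x y) := by
    intro x y z
    have h4 := hChain y z x
    linear_combination (norm := abel) h4 - S2 x y z
  have S4 : ∀ x y z : A, rt x (rt y z)
      = rt (rt x y) z + rt (lt x y) z - lt z (rt x y) - lt z (lt x y)
        - lt z (rt y x) - lt z (lt y x) := by
    intro x y z
    have h5 := hP1 x y z
    simp only [map_add, LinearMap.add_apply] at h5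
    rw [hcomm (rt x y) z, hcomm (lt x y) z] at h5
    linear_combination (norm := abel) h5 - S1 x y z - S3 x y z - S2 x y z
  intro d br
  have hd : ∀ a b : A, d a b = C a b + lt a b := by
    intro a b
    show rt a b + 2 • lt a b = C a b + lt a b
    rw [hCapp]; abel
  have hbr : ∀ a b : A, br a b = C a b - C b a := by
    intro a b
    show d a b - d b a = C a b - C b a
    rw [hd, hd, hcomm b a]
    abel
  refine ⟨?_, ?_, ?_⟩
  · -- pre-Lie identity for ▷
    intro x y z
    rw [S4 x y z, S4 y x z, hcomm y x]
    abel
  · -- Jacobi identity for the commutator bracket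
    intro x y z
    simp only [hbr]
    simp only [map_sub, LinearMap.sub_apply]
    simp only [CP1]
    abel
  · -- anti-pre-Lie identity for ⋄
    intro x y z
    simp only [hd, hbr]
    simp only [map_add, map_sub, LinearMap.add_apply, LinearMap.sub_apply]
    simp only [CP1, CF2, CF1]
    rw [CF3 x y z, CF3 y x z, hcomm (C y x) z, hcomm (C x y) z]
    linear_combination (norm := abel) CP2 x y z + CP2 x y z
end
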